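/- Let s ∈ {0,1}^{n'} with 1 ≤ n' ≤ n and j ∈ [n'], and suppose s[j] = 0. Let s' = 1^j 2^{n-j} where 2 is a character distinct from 0 and 1, and let k be the number of 1's among the first j characters of s. Then d_L(s, s') ≥ n - k. -/

import Mathlib

/-!
An optimal alignment of `s` against `1^j 2^(n-j)` cuts `s` at some position `p`, aligning
`s[:p]` with `1^j` and `s[p:]` with `2^(n-j)`. Against a constant word `b^m`, a word `x` is at
distance at least `max |x| m - #b(x)` (`#b(x)` counting the letters `b` of `x`), since only
those can be matched for free.
As `s` contains no `2`, the second part costs at least `n - j`; the first costs at least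
`max p j - #1(s[:p]) ≥ j - k`, because `s[:p]` has at most `k + (p - j)` ones.
-/

/-- Costs for the Levenshtein distance (as formerly in Mathlib, `Mathlib.Data.List.EditDistance`). -/
structure Levenshtein.Cost (α β δ : Type*) where
  delete : α → δ
  insert : β → δ
  substitute : α → β → δ

/-- The default (unit) cost function. -/
def Levenshtein.defaultCost {α : Type*} [DecidableEq α] : Levenshtein.Cost α α ℕ where
  delete _ := 1
  insert _ := 1
  substitute a b := if a = b then 0 else 1

/-- Helper for `suffixLevenshtein` (old Mathlib definition). -/
def Levenshtein.impl {α β δ : Type*} [AddZeroClass δ] [Min δ] (C : Levenshtein.Cost α β δ)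
    (xs : List α) (y : β) (d : {r : List δ // 0 < r.length}) : {r : List δ // 0 < r.length} :=
  let ⟨ds, w⟩ := d
  xs.zip (ds.zip ds.tail) |>.foldr
    (init := ⟨[C.insert y + ds.getLast (List.length_pos_iff.mp w)], by simp⟩)
    (fun ⟨x, d₀, d₁⟩ ⟨r, w⟩ =>
      ⟨min (C.delete x + r[0]) (min (C.insert y + d₀) (C.substitute x y + d₁)) :: r, by simp⟩)

/-- Levenshtein distances from all suffixes of `xs` to `ys` (old Mathlib definition). -/
def suffixLevenshtein {α β δ : Type*} [AddZeroClass δ] [Min δ] (C : Levenshtein.Cost α β δ)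
    (xs : List α) (ys : List β) : {r : List δ // 0 < r.length} :=
  ys.foldr
    (Levenshtein.impl C xs)
    (xs.foldr (init := ⟨[0], by simp⟩) (fun a ⟨r, w⟩ => ⟨(C.delete a + r[0]) :: r, by simp⟩))

/-- The Levenshtein distance (old Mathlib definition). -/
def levenshtein {α β δ : Type*} [AddZeroClass δ] [Min δ] (C : Levenshtein.Cost α β δ)
    (xs : List α) (ys : List β) : δ :=
  let ⟨r, w⟩ := suffixLevenshtein C xs ys
  r[0]

/-- The Levenshtein edit distance with unit costs, over alphabet `ℕ`
(which contains the extended alphabet `{0,1,2}`). -/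
def editDist (x y : List ℕ) : ℕ := levenshtein Levenshtein.defaultCost x y

section Recursion

variable {α β δ : Type*} [AddZeroClass δ] [Min δ] (C : Levenshtein.Cost α β δ)

theorem Levenshtein.impl_nil (y : β) (d : {r : List δ // 0 < r.length}) (w : d.1.length = 1) :
    (impl C [] y d).1 = [C.insert y + d.1[0]'d.2] := by
  obtain ⟨_ | ⟨a, _ | _⟩, hd⟩ := d
  · simp at hd
  · rfl
  · simp at w

theorem Levenshtein.impl_cons (x : α) (xs : List α) (y : β) (d : δ) (ds : List δ)
    (w' : 0 < ds.length) (w) :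
    (impl C (x :: xs) y ⟨d :: ds, w⟩).1 =
      min (C.delete x + (impl C xs y ⟨ds, w'⟩).1[0]'(impl C xs y ⟨ds, w'⟩).2)
        (min (C.insert y + d) (C.substitute x y + ds[0])) :: (impl C xs y ⟨ds, w'⟩).1 :=
  match ds, w' with | _ :: _, _ => rfl

theorem Levenshtein.impl_length (xs : List α) (y : β) (d : {r : List δ // 0 < r.length})
    (w : d.1.length = xs.length + 1) : (impl C xs y d).1.length = xs.length + 1 := by
  induction xs generalizing d with
  | nil => rw [impl_nil C y d w]; rfl
  | cons x xs ih =>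
    obtain ⟨_ | ⟨d₁, _ | ⟨d₂, ds⟩⟩, hd⟩ := d
    · simp at hd
    · simp at w
    · rw [impl_cons C x xs y d₁ (d₂ :: ds) (by simp), List.length_cons,
        ih _ (by simpa using w)]
      rfl

theorem suffixLevenshtein_cons₂ (xs : List α) (y : β) (ys : List β) :
    suffixLevenshtein C xs (y :: ys) = Levenshtein.impl C xs y (suffixLevenshtein C xs ys) :=
  rfl

theorem suffixLevenshtein_length (xs : List α) (ys : List β) :
    (suffixLevenshtein C xs ys).1.length = xs.length + 1 := by
  induction ys with
  | nil =>
    induction xs with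
    | nil => rfl
    | cons x xs ih => exact congrArg (· + 1) ih
  | cons y ys ih => exact Levenshtein.impl_length _ _ _ _ ih

theorem levenshtein_eq_of_suffixLevenshtein_eq {xs : List α} {ys : List β} {d : δ} {ds : List δ}
    (h : (suffixLevenshtein C xs ys).1 = d :: ds) : levenshtein C xs ys = d :=
  (List.getElem_of_eq h _).trans (List.getElem_cons_zero ..)

theorem suffixLevenshtein_cons_cons_of_cons₁ (x : α) (xs : List α) (y : β) (ys : List β)
    (h : (suffixLevenshtein C (x :: xs) ys).1
      = levenshtein C (x :: xs) ys :: (suffixLevenshtein C xs ys).1) :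
    (suffixLevenshtein C (x :: xs) (y :: ys)).1
      = min (C.delete x + levenshtein C xs (y :: ys))
          (min (C.insert y + levenshtein C (x :: xs) ys)
            (C.substitute x y + levenshtein C xs ys))
        :: (suffixLevenshtein C xs (y :: ys)).1 := by
  rw [suffixLevenshtein_cons₂, show suffixLevenshtein C (x :: xs) ys = ⟨_, by simp⟩ from
    Subtype.ext h, Levenshtein.impl_cons C x xs y _ _ (suffixLevenshtein C xs ys).2]
  rfl

theorem suffixLevenshtein_cons₁ (x : α) (xs : List α) (ys : List β) :
    (suffixLevenshtein C (x :: xs) ys).1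
      = levenshtein C (x :: xs) ys :: (suffixLevenshtein C xs ys).1 := by
  induction ys with
  | nil => rfl
  | cons y ys ih =>
    have h := suffixLevenshtein_cons_cons_of_cons₁ C x xs y ys ih
    rw [h, levenshtein_eq_of_suffixLevenshtein_eq C h]

theorem levenshtein_nil_nil : levenshtein C ([] : List α) ([] : List β) = 0 := rfl

theorem levenshtein_cons_nil (x : α) (xs : List α) :
    levenshtein C (x :: xs) ([] : List β) = C.delete x + levenshtein C xs ([] : List β) :=
  rfl

theorem levenshtein_nil_cons (y : β) (ys : List β) :
    levenshtein C ([] : List α) (y :: ys) = C.insert y + levenshtein C ([] : List α) ys := by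
  have h : (suffixLevenshtein C ([] : List α) (y :: ys)).1
      = [C.insert y + levenshtein C ([] : List α) ys] := by
    rw [suffixLevenshtein_cons₂, Levenshtein.impl_nil C y _ (suffixLevenshtein_length C [] ys)]
    rfl
  exact levenshtein_eq_of_suffixLevenshtein_eq C h

theorem levenshtein_cons_cons (x : α) (xs : List α) (y : β) (ys : List β) :
    levenshtein C (x :: xs) (y :: ys)
      = min (C.delete x + levenshtein C xs (y :: ys))
          (min (C.insert y + levenshtein C (x :: xs) ys)
            (C.substitute x y + levenshtein C xs ys)) :=
  levenshtein_eq_of_suffixLevenshtein_eq C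
    (suffixLevenshtein_cons_cons_of_cons₁ C x xs y ys (suffixLevenshtein_cons₁ C x xs ys))

end Recursion

section Split

variable {α β δ : Type*} [AddCommMonoid δ] [LinearOrder δ] (C : Levenshtein.Cost α β δ)

theorem levenshtein_nil_append (ys₁ ys₂ : List β) :
    levenshtein C ([] : List α) (ys₁ ++ ys₂)
      = levenshtein C ([] : List α) ys₁ + levenshtein C ([] : List α) ys₂ := by
  induction ys₁ with
  | nil => rw [List.nil_append, levenshtein_nil_nil, zero_add]
  | cons y ys₁ ih =>
    rw [List.cons_append, levenshtein_nil_cons, levenshtein_nil_cons, ih, add_assoc]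

theorem levenshtein_le_insert_add (xs : List α) (y : β) (ys : List β) :
    levenshtein C xs (y :: ys) ≤ C.insert y + levenshtein C xs ys := by
  cases xs with
  | nil => exact (levenshtein_nil_cons C y ys).le
  | cons x xs =>
    exact (levenshtein_cons_cons C x xs y ys).trans_le (min_le_of_right_le (min_le_left _ _))

theorem levenshtein_cons_cons_le_delete_add (x : α) (xs : List α) (y : β) (ys : List β) :
    levenshtein C (x :: xs) (y :: ys) ≤ C.delete x + levenshtein C xs (y :: ys) :=
  (levenshtein_cons_cons C x xs y ys).trans_le (min_le_left _ _)

theorem levenshtein_cons_cons_le_substitute_add (x : α) (xs : List α) (y : β) (ys : List β) :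
    levenshtein C (x :: xs) (y :: ys) ≤ C.substitute x y + levenshtein C xs ys :=
  (levenshtein_cons_cons C x xs y ys).trans_le (min_le_of_right_le (min_le_right _ _))

theorem exists_levenshtein_take_add_levenshtein_drop_le [IsOrderedAddMonoid δ]
    (xs : List α) (ys₁ ys₂ : List β) :
    ∃ p ≤ xs.length, levenshtein C (xs.take p) ys₁ + levenshtein C (xs.drop p) ys₂
      ≤ levenshtein C xs (ys₁ ++ ys₂) := by
  induction ys₁ generalizing xs with
  | nil => exact ⟨0, Nat.zero_le _, by rw [List.take_zero, levenshtein_nil_nil, zero_add]; rfl⟩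
  | cons y ys₁ ih =>
    induction xs with
    | nil => exact ⟨0, le_rfl, (levenshtein_nil_append C _ _).ge⟩
    | cons x xs ihx =>
      rw [List.cons_append, levenshtein_cons_cons]
      let P (d : δ) : Prop := ∃ p ≤ xs.length + 1,
        levenshtein C ((x :: xs).take p) (y :: ys₁) + levenshtein C ((x :: xs).drop p) ys₂ ≤ d
      refine min_rec' P ?delete (min_rec' P ?insert ?substitute)
      case delete =>
        obtain ⟨p, hp, hle⟩ := ihx
        refine ⟨p + 1, Nat.succ_le_succ hp, ?_⟩
        calc _ ≤ C.delete x + (levenshtein C (xs.take p) (y :: ys₁)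
              + levenshtein C (xs.drop p) ys₂) := by
              rw [List.take_succ_cons, List.drop_succ_cons, ← add_assoc]
              gcongr; exact levenshtein_cons_cons_le_delete_add C ..
          _ ≤ _ := by gcongr; exact hle
      case insert =>
        obtain ⟨p, hp, hle⟩ := ih (x :: xs)
        refine ⟨p, hp, ?_⟩
        calc _ ≤ C.insert y + (levenshtein C ((x :: xs).take p) ys₁
              + levenshtein C ((x :: xs).drop p) ys₂) := by
              rw [← add_assoc]; gcongr; exact levenshtein_le_insert_add C ..
          _ ≤ _ := by gcongr
      case substitute =>
        obtain ⟨p, hp, hle⟩ := ih xs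
        refine ⟨p + 1, Nat.succ_le_succ hp, ?_⟩
        calc _ ≤ C.substitute x y + (levenshtein C (xs.take p) ys₁
              + levenshtein C (xs.drop p) ys₂) := by
              rw [List.take_succ_cons, List.drop_succ_cons, ← add_assoc]
              gcongr; exact levenshtein_cons_cons_le_substitute_add C ..
          _ ≤ _ := by gcongr

end Split

section UnitCost

variable {α : Type*} [DecidableEq α]

theorem levenshtein_defaultCost_nil_left (ys : List α) :
    levenshtein Levenshtein.defaultCost ([] : List α) ys = ys.length := by
  induction ys with
  | nil => rfl
  | cons y ys ih => rw [levenshtein_nil_cons, ih, List.length_cons, add_comm]; rfl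

theorem levenshtein_defaultCost_nil_right (xs : List α) :
    levenshtein Levenshtein.defaultCost xs ([] : List α) = xs.length := by
  induction xs with
  | nil => rfl
  | cons x xs ih => rw [levenshtein_cons_nil, ih, List.length_cons, add_comm]; rfl

theorem max_length_le_levenshtein_replicate_add_count (xs : List α) (m : ℕ) (b : α) :
    max xs.length m ≤ levenshtein Levenshtein.defaultCost xs (List.replicate m b) + xs.count b := by
  induction xs generalizing m with
  | nil => simp [levenshtein_defaultCost_nil_left]
  | cons x xs ih =>
    induction m with
    | zero =>
      rw [List.replicate_zero, levenshtein_defaultCost_nil_right]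
      omega
    | succ m ihm =>
      have hdelete := ih (m + 1)
      have hsubstitute := ih m
      rw [List.replicate_succ] at hdelete ⊢
      rw [levenshtein_cons_cons]
      simp only [Levenshtein.defaultCost, List.count_cons, beq_iff_eq, List.length_cons] at *
      split_ifs at * <;> omega

end UnitCost

theorem List.count_take_le_count_take_add {α : Type*} [BEq α] (l : List α) (a : α) (i j : ℕ) :
    (l.take i).count a ≤ (l.take j).count a + (i - j) := by
  rcases le_total i j with h | h
  · exact ((List.take_sublist_take_left h).count_le a).trans (Nat.le_add_right _ _)
  · rw [← Nat.add_sub_cancel' h, List.take_add, List.count_append, Nat.add_sub_cancel_left]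
    exact Nat.add_le_add_left (List.count_le_length.trans (List.length_take_le _ _)) _

theorem edit_dist_to_ones_twos_query_lower_bound_general
    (n : ℕ) (s : List ℕ) (hbin : ∀ c ∈ s, c = 0 ∨ c = 1) (j : ℕ)
    (k : ℕ) (hk : k = (s.take j).count 1) :
    n - k ≤ editDist s (List.replicate j 1 ++ List.replicate (n - j) 2) := by
  obtain ⟨p, hp, hsplit⟩ := exists_levenshtein_take_add_levenshtein_drop_le
    Levenshtein.defaultCost s (List.replicate j 1) (List.replicate (n - j) 2)
  have hones := max_length_le_levenshtein_replicate_add_count (s.take p) j 1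
  have htwos := max_length_le_levenshtein_replicate_add_count (s.drop p) (n - j) 2
  have hno_twos : (s.drop p).count 2 = 0 :=
    List.count_eq_zero.2 fun h ↦ by simpa using hbin 2 (List.mem_of_mem_drop h)
  have hcount : (s.take p).count 1 ≤ k + (p - j) := hk ▸ s.count_take_le_count_take_add 1 p j
  rw [List.length_take, min_eq_left hp] at hones
  unfold editDist
  omega

/-- For a binary sequence `s` of length `n'` with `1 ≤ n' ≤ n`, `j ∈ [n']`
with `s[j] = 0` (1-indexed), `s' = 1^j 2^(n-j)`, and `k` the number of `1`'s among the
first `j` characters of `s`, we have `d_L(s, s') ≥ n - k`. -/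
theorem edit_dist_to_ones_twos_query_lower_bound
    (n n' : ℕ) (hn'1 : 1 ≤ n') (hn'n : n' ≤ n)
    (s : List ℕ) (hlen : s.length = n')
    (hbin : ∀ c ∈ s, c = 0 ∨ c = 1)
    (j : ℕ) (hj1 : 1 ≤ j) (hjn' : j ≤ n') (hsj : s.getD (j - 1) 0 = 0)
    (k : ℕ) (hk : k = (s.take j).count 1) :
    n - k ≤ editDist s (List.replicate j 1 ++ List.replicate (n - j) 2) :=
  edit_dist_to_ones_twos_query_lower_bound_general n s hbin j k hk
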